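/- arXiv:1710.10572 — 3 statements merged into one kernel-verified Lean document; each statement's English description precedes it below -/
import Mathlib

section
/- In ℤ[y,y⁻¹,z,z⁻¹][[q]], one has ∏_{ε₁,ε₂ ∈ {+1,−1}} (1 − q y^{ε₁} z^{ε₂}) · ∑_{σ=0}^{∞} ∑_{n=0}^{∞} q^{σ+2n} χ_σ(y) χ_σ(z) = 1. (Character expansion of the universal AdS₅ function P₄ into so(4) ≅ su(2)⊕su(2) characters of the totally symmetric representations (σ,0).) -/
/-
Write s = y + y⁻¹ and t = z + z⁻¹. Since y·y⁻¹ = z·z⁻¹ = 1, the product of the four factors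
1 - q y^{±1} z^{±1} is the palindromic quartic 1 - st q + (s² + t² - 2) q² - st q³ + q⁴.
The characters u_n = χ_n(y) and v_n = χ_n(z) obey u_{n+2} = s u_{n+1} - u_n and
v_{n+2} = t v_{n+1} - v_n, so their product u_n v_n satisfies the order-four recurrence whose
characteristic polynomial has the roots y^{±1} z^{±1}; comparing the first four coefficients
gives quartic · ∑ u_n v_n qⁿ = 1 - q². The double sum over σ and n is ∑ u_σ v_σ q^σ times
∑ q^{2n} = 1/(1 - q²).
-/

/-- The two-variable Laurent polynomial ring ℤ[y,y⁻¹,z,z⁻¹], realised as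
Laurent polynomials in `z` over Laurent polynomials in `y`. -/
noncomputable abbrev L2 : Type := LaurentPolynomial (LaurentPolynomial ℤ)

/-- The su(2) character `χ_n(y) = ∑_{k=0}^n y^{n-2k}`, in the variable `y`. -/
noncomputable def chiY (n : ℕ) : L2 :=
  LaurentPolynomial.C (∑ k ∈ Finset.range (n + 1), LaurentPolynomial.T ((n : ℤ) - 2 * k))

/-- The su(2) character `χ_n(z) = ∑_{k=0}^n z^{n-2k}`, in the variable `z`. -/
noncomputable def chiZv (n : ℕ) : L2 :=
  ∑ k ∈ Finset.range (n + 1), LaurentPolynomial.T ((n : ℤ) - 2 * k)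

/-- `y^{ε₁} z^{ε₂}` as an element of ℤ[y,y⁻¹,z,z⁻¹]. -/
noncomputable def yz (e₁ e₂ : ℤ) : L2 :=
  LaurentPolynomial.C (LaurentPolynomial.T e₁) * LaurentPolynomial.T e₂

/-- `∏_{ε₁,ε₂∈{±1}} (1 - q y^{ε₁} z^{ε₂})`, the inverse of the universal AdS₅
function `P₄(q,y,z)`, in ℤ[y,y⁻¹,z,z⁻¹][[q]]. -/
noncomputable def P4inv : PowerSeries L2 :=
  (1 - PowerSeries.C (yz 1 1) * PowerSeries.X) *
  (1 - PowerSeries.C (yz 1 (-1)) * PowerSeries.X) *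
  (1 - PowerSeries.C (yz (-1) 1) * PowerSeries.X) *
  (1 - PowerSeries.C (yz (-1) (-1)) * PowerSeries.X)

open Finset

section Characters

open LaurentPolynomial

variable {R : Type*} [CommRing R]

noncomputable def su2Char (n : ℕ) : R[T;T⁻¹] :=
  ∑ k ∈ range (n + 1), T ((n : ℤ) - 2 * k)

@[simp]
theorem su2Char_zero : (su2Char 0 : R[T;T⁻¹]) = 1 := by
  simp [su2Char]

@[simp]
theorem su2Char_one : (su2Char 1 : R[T;T⁻¹]) = T 1 + T (-1) := by
  simp [su2Char, sum_range_succ]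

theorem su2Char_add_two (n : ℕ) :
    (su2Char (n + 2) : R[T;T⁻¹]) = (T 1 + T (-1)) * su2Char (n + 1) - su2Char n := by
  have h_up : (T 1 : R[T;T⁻¹]) * su2Char (n + 1) =
      ∑ k ∈ range (n + 2), T ((n : ℤ) + 2 - 2 * k) := by
    simp only [su2Char, mul_sum, ← T_add]
    refine sum_congr rfl fun k _ => ?_
    push_cast; ring_nf
  have h_down : (T (-1) : R[T;T⁻¹]) * su2Char (n + 1) =
      ∑ k ∈ range (n + 2), T ((n : ℤ) - 2 * k) := by
    simp only [su2Char, mul_sum, ← T_add]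
    refine sum_congr rfl fun k _ => ?_
    push_cast; ring_nf
  -- both sides then differ from `su2Char (n + 2) + su2Char n` by the lowest weight `T (-n - 2)`
  have h_lowest : ((n + 2 : ℕ) : ℤ) - 2 * (n + 2 : ℕ) = n - 2 * (n + 1 : ℕ) := by
    push_cast; ring
  rw [add_mul, h_up, h_down, su2Char, sum_range_succ, h_lowest,
    sum_range_succ (fun k : ℕ => (T ((n : ℤ) - 2 * k) : R[T;T⁻¹])), su2Char]
  push_cast
  ring

theorem T_one_mul_T_neg_one : (T 1 : R[T;T⁻¹]) * T (-1) = 1 := by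
  rw [← T_add, add_neg_cancel, T_zero]

end Characters

theorem one_sub_mul_prod_eq_palindromic {S : Type*} [CommRing S] {a a' b b' : S} (x : S)
    (ha : a * a' = 1) (hb : b * b' = 1) :
    (1 - a * b * x) * (1 - a * b' * x) * (1 - a' * b * x) * (1 - a' * b' * x) =
      1 - (a + a') * (b + b') * x + ((a + a') ^ 2 + (b + b') ^ 2 - 2) * x ^ 2
        - (a + a') * (b + b') * x ^ 3 + x ^ 4 := by
  grind

section GeneratingFunctions

open PowerSeries

theorem palindromicQuartic_mul_mk_mul_eq {R : Type*} [CommRing R] {s t : R} {u v : ℕ → R}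
    (hu₀ : u 0 = 1) (hu₁ : u 1 = s) (hu : ∀ n, u (n + 2) = s * u (n + 1) - u n)
    (hv₀ : v 0 = 1) (hv₁ : v 1 = t) (hv : ∀ n, v (n + 2) = t * v (n + 1) - v n) :
    (1 - C (s * t) * X + C (s ^ 2 + t ^ 2 - 2) * X ^ 2 - C (s * t) * X ^ 3 + X ^ 4 : R⟦X⟧) *
      mk (fun n => u n * v n) = 1 - X ^ 2 := by
  ext n
  simp only [sub_mul, add_mul, one_mul, mul_assoc, map_sub, map_add, coeff_C_mul,
    coeff_X_pow_mul', coeff_mk, coeff_one, coeff_X_pow]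
  rcases n with _ | _ | _ | _ | n
  · simp [hu₀, hv₀]
  · simp [hu₀, hu₁, hv₀, hv₁]
  · simp [hu 0, hv 0, hu₀, hu₁, hv₀, hv₁]
    ring
  · simp [hu 0, hv 0, hu 1, hv 1, hu₀, hu₁, hv₀, hv₁]
    ring
  · simp [hu (n + 2), hv (n + 2), hu (n + 1), hv (n + 1), hu n, hv n]
    ring

theorem mk_sum_range_parity_eq_mul {R : Type*} [Semiring R] (a : ℕ → R) :
    mk (fun m => ∑ σ ∈ range (m + 1), if (m - σ) % 2 = 0 then a σ else 0) =
      mk a * mk (fun k => if k % 2 = 0 then 1 else 0) := by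
  ext m
  simp [coeff_mul, Finset.Nat.sum_antidiagonal_eq_sum_range_succ_mk, mul_ite]

theorem one_sub_X_sq_mul_mk_even {R : Type*} [Ring R] :
    (1 - X ^ 2 : R⟦X⟧) * mk (fun k => if k % 2 = 0 then 1 else 0) = 1 := by
  ext n
  rcases n with _ | _ | n
  · simp
  · simp [sub_mul, coeff_X_pow_mul']
  · simp [sub_mul, coeff_X_pow_mul', add_assoc]

end GeneratingFunctions

section P4

open LaurentPolynomial PowerSeries

theorem chiY_eq_C_su2Char (n : ℕ) : chiY n = LaurentPolynomial.C (su2Char n) := rfl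

theorem chiZv_eq_su2Char (n : ℕ) : chiZv n = su2Char n := rfl

theorem P4inv_eq :
    P4inv = 1 - PowerSeries.C (LaurentPolynomial.C (T 1 + T (-1)) * (T 1 + T (-1))) * X
      + PowerSeries.C (LaurentPolynomial.C (T 1 + T (-1)) ^ 2 + (T 1 + T (-1)) ^ 2 - 2) * X ^ 2
      - PowerSeries.C (LaurentPolynomial.C (T 1 + T (-1)) * (T 1 + T (-1))) * X ^ 3 + X ^ 4 := by
  have key := one_sub_mul_prod_eq_palindromic (X : L2⟦X⟧)
    (a := PowerSeries.C (LaurentPolynomial.C (T 1)))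
    (a' := PowerSeries.C (LaurentPolynomial.C (T (-1))))
    (b := PowerSeries.C (T 1)) (b' := PowerSeries.C (T (-1)))
    (by rw [← map_mul, ← map_mul, T_one_mul_T_neg_one, map_one, map_one])
    (by rw [← map_mul, T_one_mul_T_neg_one, map_one])
  simp only [P4inv, yz, map_mul, map_add, map_sub, map_pow, map_ofNat] at key ⊢
  linear_combination key

end P4

/-- Character expansion of the universal AdS₅ function `P₄` into so(4) characters of the
totally symmetric irreps `(σ,0)`:
`∏_{ε₁,ε₂}(1 - q y^{ε₁}z^{ε₂}) · ∑_{σ,n≥0} q^{σ+2n} χ_σ(y)χ_σ(z) = 1`. -/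
theorem P4_expansion :
    P4inv * PowerSeries.mk (fun m =>
      ∑ σ ∈ Finset.range (m + 1), if (m - σ) % 2 = 0 then chiY σ * chiZv σ else 0) = 1 := by
  rw [mk_sum_range_parity_eq_mul, ← mul_assoc, P4inv_eq,
    palindromicQuartic_mul_mk_mul_eq
      (by simp [chiY_eq_C_su2Char]) (by simp [chiY_eq_C_su2Char])
      (fun n => by simp [chiY_eq_C_su2Char, su2Char_add_two])
      (by simp [chiZv_eq_su2Char]) (by simp [chiZv_eq_su2Char])
      (fun n => by simp [chiZv_eq_su2Char, su2Char_add_two]),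
    one_sub_X_sq_mul_mk_even]
end

section
/- For all natural numbers s, τ with 1 ≤ τ ≤ s, in ℤ[x,x⁻¹][[q]] one has (1 − qx)(1 − qx⁻¹) · ∑_{k=0}^{τ−1} ∑_{σ=0}^{∞} q^{σ+k} χ_{s+σ−k}(x) = χ_s(x) − q^τ χ_{s−τ}(x). (This encodes the so(2)⊕so(3) decomposition of the so(2,3) module of a depth-τ partially massless spin-s field: D(s+2−τ;(s)) ≅ ⊕_{σ,n≥0} ⊕_{k=0}^{τ−1} D(s+2−τ+n+σ+k;(s+σ−k)).) -/
/-!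
Writing `χ₁ = x + x⁻¹`, the characters satisfy `χ₁ χ_{n+1} = χ_{n+2} + χ_n`, so multiplying
`∑_σ q^σ χ_{n+σ}` by `(1 - qx)(1 - qx⁻¹) = 1 - χ₁ q + q²` kills every coefficient except the first
two, leaving `χ_n - q χ_{n-1}` for `n ≥ 1`. The depth-`τ` series is `∑_{k<τ} q^k ∑_σ q^σ χ_{s-k+σ}`,
and after the multiplication the sum over `k` telescopes to `χ_s - q^τ χ_{s-τ}`.
-/

/-- The so(3) character `χ_n(x) = ∑_{k=0}^n x^{n-2k}` in ℤ[x,x⁻¹]. -/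
noncomputable def chi (n : ℕ) : LaurentPolynomial ℤ :=
  ∑ k ∈ Finset.range (n + 1), LaurentPolynomial.T ((n : ℤ) - 2 * k)

open PowerSeries
open LaurentPolynomial (T T_add)

lemma chi_succ (n : ℕ) : chi (n + 1) = T 1 * chi n + T (-(n + 1 : ℤ)) := by
  unfold chi
  rw [Finset.sum_range_succ, Finset.mul_sum]
  congr 1
  · refine Finset.sum_congr rfl fun k _ => ?_
    rw [← T_add]
    congr 1
    push_cast
    ring
  · congr 1
    push_cast
    ring

lemma chi_one_mul_chi (n : ℕ) :
    (T 1 + T (-1) : LaurentPolynomial ℤ) * chi (n + 1) = chi (n + 2) + chi n := by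
  have h₁ : (T (-1) * T 1 : LaurentPolynomial ℤ) = 1 := by rw [← T_add]; simp
  have h₂ : (T (-1) * T (-(n + 1 : ℤ)) : LaurentPolynomial ℤ) = T (-((n + 1 : ℕ) + 1 : ℤ)) := by
    rw [← T_add]; congr 1; push_cast; ring
  rw [chi_succ (n + 1), chi_succ n]
  linear_combination chi n * h₁ + h₂

lemma one_sub_C_mul_X_mul_one_sub_C_mul_X {R : Type*} [CommRing R] {u v : R} (h : u * v = 1) :
    (1 - C u * X) * (1 - C v * X) = 1 - C (u + v) * X + X ^ 2 := by
  have huv : C u * C v = (1 : R⟦X⟧) := by rw [← map_mul, h, map_one]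
  rw [map_add]
  linear_combination X ^ 2 * huv

lemma one_sub_C_mul_X_add_X_sq_mul_mk {R : Type*} [CommRing R] (a : R) {f : ℕ → R}
    (hf : ∀ m, f (m + 2) = a * f (m + 1) - f m) :
    (1 - C a * X + X ^ 2) * mk f = C (f 0) + C (f 1 - a * f 0) * X := by
  ext (_ | _ | m)
  · simp
  · simp [sub_mul, add_mul, mul_assoc, coeff_X_pow_mul']
  · simp [sub_mul, add_mul, mul_assoc, coeff_X_pow_mul', hf]

lemma mul_mk_chi (n : ℕ) :
    (1 - C (T 1) * X) * (1 - C (T (-1)) * X) * mk (fun m => chi (n + 1 + m)) =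
      C (chi (n + 1)) - C (chi n) * X := by
  rw [one_sub_C_mul_X_mul_one_sub_C_mul_X (by rw [← T_add]; simp),
    one_sub_C_mul_X_add_X_sq_mul_mk _ fun m => ?_]
  · have hcoeff : chi (n + 2) - (T 1 + T (-1)) * chi (n + 1) = -chi n := by
      linear_combination -chi_one_mul_chi n
    simp only [add_zero, show n + 1 + 1 = n + 2 from rfl, hcoeff, map_neg]
    ring
  · simp only [← add_assoc, chi_one_mul_chi]
    ring

lemma mk_sum_range_chi {s τ : ℕ} (hτs : τ ≤ s) :
    (mk fun m => ∑ k ∈ Finset.range τ, if k ≤ m then chi (s + (m - k) - k) else 0 :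
        (LaurentPolynomial ℤ)⟦X⟧) =
      ∑ k ∈ Finset.range τ, X ^ k * mk (fun m => chi (s - k + m)) := by
  ext m : 1
  simp only [coeff_mk, map_sum, coeff_X_pow_mul']
  refine Finset.sum_congr rfl fun k hk => ?_
  have hks : k < s := (Finset.mem_range.mp hk).trans_le hτs
  rw [show s + (m - k) - k = s - k + (m - k) by omega]

theorem partially_massless_decomposition_general (s τ : ℕ) (hτs : τ ≤ s) :
    (1 - PowerSeries.C (R := LaurentPolynomial ℤ) (LaurentPolynomial.T 1) * PowerSeries.X) *
      (1 - PowerSeries.C (R := LaurentPolynomial ℤ) (LaurentPolynomial.T (-1)) * PowerSeries.X) *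
      PowerSeries.mk (fun m =>
        ∑ k ∈ Finset.range τ, if k ≤ m then chi (s + (m - k) - k) else 0) =
    PowerSeries.C (R := LaurentPolynomial ℤ) (chi s) -
      PowerSeries.C (R := LaurentPolynomial ℤ) (chi (s - τ)) * PowerSeries.X ^ τ := by
  have hterm : ∀ k ∈ Finset.range τ,
      (1 - C (T 1) * X) * (1 - C (T (-1)) * X) * (X ^ k * mk fun m => chi (s - k + m)) =
        C (chi (s - k)) * X ^ k - C (chi (s - (k + 1))) * X ^ (k + 1) := by
    intro k hk
    have hks : k < s := (Finset.mem_range.mp hk).trans_le hτs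
    obtain ⟨n, hn⟩ : ∃ n, s - k = n + 1 := ⟨s - k - 1, by omega⟩
    rw [hn, mul_left_comm, mul_mk_chi, show s - (k + 1) = n by omega]
    ring
  rw [mk_sum_range_chi hτs, Finset.mul_sum, Finset.sum_congr rfl hterm,
    Finset.sum_range_sub' (fun k => C (chi (s - k)) * X ^ k)]
  simp

/-- so(2)⊕so(3) decomposition of the depth-τ partially massless spin-s module of so(2,3):
`(1 - qx)(1 - qx⁻¹) · ∑_{k=0}^{τ-1} ∑_{σ≥0} q^{σ+k} χ_{s+σ-k}(x) = χ_s(x) - q^τ χ_{s-τ}(x)`.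
The double series has coefficient of `q^m` equal to `∑_{k < τ, k ≤ m} χ_{s+(m-k)-k}(x)`. -/
theorem partially_massless_decomposition (s τ : ℕ) (hτ : 1 ≤ τ) (hτs : τ ≤ s) :
    (1 - PowerSeries.C (R := LaurentPolynomial ℤ) (LaurentPolynomial.T 1) * PowerSeries.X) *
      (1 - PowerSeries.C (R := LaurentPolynomial ℤ) (LaurentPolynomial.T (-1)) * PowerSeries.X) *
      PowerSeries.mk (fun m =>
        ∑ k ∈ Finset.range τ, if k ≤ m then chi (s + (m - k) - k) else 0) =
    PowerSeries.C (R := LaurentPolynomial ℤ) (chi s) -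
      PowerSeries.C (R := LaurentPolynomial ℤ) (chi (s - τ)) * PowerSeries.X ^ τ :=
  partially_massless_decomposition_general s τ hτs
end

section
/- For every natural number s ≥ 1, in ℤ[y,y⁻¹,z,z⁻¹][[q]] one has ∏_{ε₁,ε₂∈{±1}}(1 − q y^{ε₁} z^{ε₂}) · (∑_{a=0}^{∞} q^a χ_{2s+a}(y) χ_a(z))² = ∑_{σ=0}^{2s} χ_{2σ}(y) + ∑_{b=1}^{∞} q^{b} (χ_{4s+b}(y) χ_b(z) − q χ_{4s+b−1}(y) χ_{b−1}(z)). (Character form of the Flato–Frønsdal theorem for two so(2,4) spin-s singletons of the same chirality: D(s+1;(s,s)₊)^{⊗2} ≅ ⊕_{σ=0}^{2s} D(2s+2;(σ,σ)₊) ⊕ ⊕_{σ≥2s+1} D(σ+2;(σ,2s)₊), i.e. a finite tower of massive fields plus an infinite tower of mixed-symmetry massless fields.) -/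
/-!
Multiplying by the Weyl denominator `(y - y⁻¹)(z - z⁻¹)` turns every coefficient
`χ_{t+a}(y) χ_a(z)` of the singleton series into four monomials, so the singleton series
becomes `∑_{ε₁,ε₂ = ±1} ε₁ε₂ y^{ε₁(t+1)} z^{ε₂} / ((1 - q y^{ε₁} z^{ε₂})(y - y⁻¹)(z - z⁻¹))`.
The finite tower is `∑_{σ ≤ t} χ_{2σ} = χ_t²` (Clebsch–Gordan), and the infinite tower is
`(1 - q²)` times the singleton series with `t` replaced by `2t`, minus its constant term `χ_{2t}`.
After embedding `ℤ[y^±, z^±][[q]]` into its field of fractions, the theorem is therefore an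
identity between rational functions of `y`, `z`, `q` and `y^{t+1}`, checked by clearing
denominators.
-/

open PowerSeries
open LaurentPolynomial hiding C

section Field

variable {K : Type*} [Field K]

def weylChar (Y : K) (n : ℕ) : K := (Y ^ (n + 1) - (Y ^ (n + 1))⁻¹) / (Y - Y⁻¹)

theorem sum_weylChar_two_mul {Y : K} (hY : Y ≠ 0) (hY' : Y - Y⁻¹ ≠ 0) (t : ℕ) :
    ∑ σ ∈ Finset.range (t + 1), weylChar Y (2 * σ) = weylChar Y t ^ 2 := by
  induction t with
  | zero => simp [weylChar, hY']
  | succ t ih =>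
    rw [Finset.sum_range_succ, ih]
    unfold weylChar
    field_simp
    ring

/-- With `B = Y ^ (t + 1)` this is `(Y - Y⁻¹)(Z - Z⁻¹) ∑ₐ qᵃ χ_{t+a}(Y) χₐ(Z)`, the four
geometric series produced by the Weyl numerators. -/
def weylSeries (Y Z q B : K) : K :=
  B * Z / (1 - Y * Z * q) - B * Z⁻¹ / (1 - Y * Z⁻¹ * q) - B⁻¹ * Z / (1 - Y⁻¹ * Z * q) +
    B⁻¹ * Z⁻¹ / (1 - Y⁻¹ * Z⁻¹ * q)

theorem flato_fronsdal_weylSeries {Y Z : K} (q : K) (t : ℕ) (hY : Y ≠ 0) (hZ : Z ≠ 0)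
    (hY' : Y - Y⁻¹ ≠ 0) (hZ' : Z - Z⁻¹ ≠ 0)
    (h₁ : 1 - Y * Z * q ≠ 0) (h₂ : 1 - Y * Z⁻¹ * q ≠ 0) (h₃ : 1 - Y⁻¹ * Z * q ≠ 0)
    (h₄ : 1 - Y⁻¹ * Z⁻¹ * q ≠ 0) :
    (1 - Y * Z * q) * (1 - Y * Z⁻¹ * q) * (1 - Y⁻¹ * Z * q) * (1 - Y⁻¹ * Z⁻¹ * q) *
      (weylSeries Y Z q (Y ^ (t + 1)) / ((Y - Y⁻¹) * (Z - Z⁻¹))) ^ 2 =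
    weylChar Y t ^ 2 +
      ((1 - q ^ 2) * (weylSeries Y Z q (Y ^ (2 * t + 1)) / ((Y - Y⁻¹) * (Z - Z⁻¹))) -
        weylChar Y (2 * t)) := by
  have hA : Y ^ (2 * t + 1) = (Y ^ (t + 1)) ^ 2 * Y⁻¹ := by field_simp; ring
  have hA0 : Y ^ (t + 1) ≠ 0 := pow_ne_zero _ hY
  unfold weylChar weylSeries
  rw [hA]
  generalize Y ^ (t + 1) = A at hA0 ⊢
  -- the hypotheses in the shape `field_simp` asks for once the inner inverses are cleared
  have hY₂ : Y ^ 2 - 1 ≠ 0 := by contrapose! hY'; field_simp; linear_combination hY'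
  have hZ₂ : Z ^ 2 - 1 ≠ 0 := by contrapose! hZ'; field_simp; linear_combination hZ'
  have h₂' : Z - Y * q ≠ 0 := by contrapose! h₂; field_simp; linear_combination h₂
  have h₃' : Y - Z * q ≠ 0 := by contrapose! h₃; field_simp; linear_combination h₃
  have h₄' : Y * Z - q ≠ 0 := by contrapose! h₄; field_simp; linear_combination h₄
  field_simp
  ring

end Field

namespace LaurentPolynomial

variable {R : Type*} [CommRing R]

theorem T_sub_T_neg_one_mul_sum (n : ℕ) :
    (T 1 - T (-1) : R[T;T⁻¹]) * ∑ k ∈ Finset.range (n + 1), T ((n : ℤ) - 2 * k) =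
      T (n + 1) - T (-(n + 1)) := by
  have hterm : ∀ k : ℕ, (T 1 - T (-1) : R[T;T⁻¹]) * T ((n : ℤ) - 2 * k) =
      T ((n : ℤ) + 1 - 2 * k) - T ((n : ℤ) + 1 - 2 * (k + 1 : ℕ)) := by
    intro k
    rw [sub_mul, ← T_add, ← T_add]
    push_cast
    ring_nf
  rw [Finset.mul_sum, Finset.sum_congr rfl fun k _ => hterm k, Finset.sum_range_sub']
  push_cast
  ring_nf

theorem C_injective : Function.Injective (C : R →+* R[T;T⁻¹]) :=
  fun a b h => by simpa using congrArg (fun p : R[T;T⁻¹] => p.coeff 0) h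

theorem T_one_sub_T_neg_one_ne_zero [Nontrivial R] : (T 1 - T (-1) : R[T;T⁻¹]) ≠ 0 := by
  rw [sub_ne_zero]
  intro h
  simpa using congrArg (fun p : R[T;T⁻¹] => p.coeff 1) h

variable {K : Type*} [Field K]

theorem map_T_one_mul_map_T_neg_one (f : R[T;T⁻¹] →+* K) : f (T 1) * f (T (-1)) = 1 := by
  rw [← map_mul, ← T_add, add_neg_cancel, T_zero, map_one]

theorem map_T (f : R[T;T⁻¹] →+* K) (n : ℤ) : f (T n) = f (T 1) ^ n := by
  have h := map_T_one_mul_map_T_neg_one f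
  have h0 : f (T 1) ≠ 0 := left_ne_zero_of_mul_eq_one h
  induction n using Int.induction_on with
  | zero => simp
  | succ n ih => rw [T_add, map_mul, ih, zpow_add_one₀ h0]
  | pred n ih =>
    rw [sub_eq_add_neg, T_add, map_mul, ih, zpow_add₀ h0, zpow_neg_one,
      eq_inv_of_mul_eq_one_right h]

theorem map_sum_T_eq_weylChar (f : R[T;T⁻¹] →+* K) (hf : f (T 1) - (f (T 1))⁻¹ ≠ 0)
    (n : ℕ) :
    f (∑ k ∈ Finset.range (n + 1), T ((n : ℤ) - 2 * k)) = weylChar (f (T 1)) n := by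
  have h := congrArg f (T_sub_T_neg_one_mul_sum (R := R) n)
  rw [map_mul, map_sub, map_sub, map_T f (-1), map_T f (n + 1), map_T f (-(n + 1)), zpow_neg_one,
    zpow_neg, ← Nat.cast_succ, zpow_natCast] at h
  rw [weylChar, eq_div_iff hf, mul_comm, h]

theorem map_T_one_sub_inv_ne_zero [Nontrivial R] {f : R[T;T⁻¹] →+* K}
    (hf : Function.Injective f) :
    f (T 1) - (f (T 1))⁻¹ ≠ 0 := by
  rw [← zpow_neg_one, ← map_T, ← map_sub]
  exact (map_ne_zero_iff f hf).mpr T_one_sub_T_neg_one_ne_zero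

end LaurentPolynomial

theorem PowerSeries.one_sub_C_mul_X_mul_mk_pow {R : Type*} [CommRing R] (w : R) :
    (1 - C w * X) * mk (fun n => w ^ n) = 1 := by
  have h := congrArg (rescale w) (mk_one_mul_one_sub_eq_one R)
  rw [map_mul, map_sub, map_one, rescale_X, rescale_mk] at h
  simpa [mul_comm] using h

theorem yz_mul (a b c d : ℤ) : yz a b * yz c d = yz (a + c) (b + d) := by
  simp only [yz, T_add, map_mul]; ring

theorem yz_pow (a b : ℤ) (n : ℕ) : yz a b ^ n = yz (n * a) (n * b) := by
  simp only [yz, mul_pow, ← map_pow, T_pow]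

theorem C_T_sub_mul_T_sub (a b c d : ℤ) :
    LaurentPolynomial.C (T a - T b) * (T c - T d) = yz a c - yz a d - yz b c + yz b d := by
  simp only [yz, map_sub]; ring

noncomputable def singletonSeries (t : ℕ) : PowerSeries L2 := mk fun a => chiY (t + a) * chiZv a

theorem C_mul_singletonSeries (t : ℕ) :
    C (yz 1 1 - yz 1 (-1) - yz (-1) 1 + yz (-1) (-1)) * singletonSeries t =
      C (yz (t + 1) 1) * mk (fun n => yz 1 1 ^ n) -
        C (yz (t + 1) (-1)) * mk (fun n => yz 1 (-1) ^ n) -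
        C (yz (-(t + 1)) 1) * mk (fun n => yz (-1) 1 ^ n) +
        C (yz (-(t + 1)) (-1)) * mk (fun n => yz (-1) (-1) ^ n) := by
  refine PowerSeries.ext fun n => ?_
  have hchi : (yz 1 1 - yz 1 (-1) - yz (-1) 1 + yz (-1) (-1)) * (chiY (t + n) * chiZv n) =
      LaurentPolynomial.C ((T 1 - T (-1)) *
          ∑ k ∈ Finset.range (t + n + 1), T (((t + n : ℕ) : ℤ) - 2 * k)) *
        ((T 1 - T (-1)) * ∑ k ∈ Finset.range (n + 1), T ((n : ℤ) - 2 * k)) := by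
    rw [← C_T_sub_mul_T_sub, chiY, chiZv, map_mul]; ring
  rw [coeff_C_mul, singletonSeries, coeff_mk, hchi, T_sub_T_neg_one_mul_sum,
    T_sub_T_neg_one_mul_sum, C_T_sub_mul_T_sub]
  simp only [map_add, map_sub, coeff_C_mul, coeff_mk, yz_pow, yz_mul]
  push_cast
  ring_nf

theorem massless_tower_eq (u : ℕ) :
    mk (fun m => (if 1 ≤ m then chiY (u + m) * chiZv m else 0) -
        (if 2 ≤ m then chiY (u + m - 2) * chiZv (m - 2) else 0)) =
      (1 - X ^ 2) * singletonSeries u - C (chiY u) := by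
  refine PowerSeries.ext fun m => ?_
  rcases m with _ | _ | m
  · simp [singletonSeries, chiZv]
  · simp [singletonSeries, sub_mul, coeff_X_pow_mul']
  · simp [singletonSeries, sub_mul, coeff_X_pow_mul', show u + (m + 2) - 2 = u + m by omega]

abbrev CharField : Type := FractionRing (PowerSeries L2)

namespace CharField

noncomputable def embed : PowerSeries L2 →+* CharField := algebraMap _ _

theorem embed_injective : Function.Injective embed := IsFractionRing.injective _ _

noncomputable def coeffEmbed : L2 →+* CharField := embed.comp C

noncomputable def yEmbed : LaurentPolynomial ℤ →+* CharField :=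
  coeffEmbed.comp LaurentPolynomial.C

noncomputable def Y : CharField := yEmbed (T 1)
noncomputable def Z : CharField := coeffEmbed (T 1)
noncomputable def q : CharField := embed X

theorem embed_X : embed X = q := rfl

theorem coeffEmbed_injective : Function.Injective coeffEmbed :=
  embed_injective.comp PowerSeries.C_injective

theorem yEmbed_injective : Function.Injective yEmbed :=
  coeffEmbed_injective.comp LaurentPolynomial.C_injective

theorem Y_ne_zero : Y ≠ 0 :=
  left_ne_zero_of_mul_eq_one (map_T_one_mul_map_T_neg_one yEmbed)

theorem Z_ne_zero : Z ≠ 0 :=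
  left_ne_zero_of_mul_eq_one (map_T_one_mul_map_T_neg_one coeffEmbed)

theorem Y_sub_inv_ne_zero : Y - Y⁻¹ ≠ 0 := map_T_one_sub_inv_ne_zero yEmbed_injective

theorem Z_sub_inv_ne_zero : Z - Z⁻¹ ≠ 0 :=
  map_T_one_sub_inv_ne_zero coeffEmbed_injective

theorem embed_C_yz (a b : ℤ) : embed (C (yz a b)) = Y ^ a * Z ^ b := by
  rw [yz, map_mul, map_mul]
  exact congrArg₂ (· * ·) (map_T yEmbed a) (map_T coeffEmbed b)

theorem embed_C_chiY (n : ℕ) : embed (C (chiY n)) = weylChar Y n :=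
  map_sum_T_eq_weylChar yEmbed Y_sub_inv_ne_zero n

theorem embed_mk_pow_mul (w : L2) : (1 - embed (C w) * q) * embed (mk fun n => w ^ n) = 1 := by
  simpa [embed_X] using congrArg embed (one_sub_C_mul_X_mul_mk_pow w)

theorem embed_mk_pow (w : L2) : embed (mk fun n => w ^ n) = (1 - embed (C w) * q)⁻¹ :=
  eq_inv_of_mul_eq_one_right (embed_mk_pow_mul w)

theorem one_sub_mul_q_ne_zero (a b : ℤ) : 1 - Y ^ a * Z ^ b * q ≠ 0 := by
  rw [← embed_C_yz]
  exact left_ne_zero_of_mul_eq_one (embed_mk_pow_mul _)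

theorem embed_P4inv :
    embed P4inv =
      (1 - Y * Z * q) * (1 - Y * Z⁻¹ * q) * (1 - Y⁻¹ * Z * q) * (1 - Y⁻¹ * Z⁻¹ * q) := by
  simp only [P4inv, map_mul, map_sub, map_one, embed_C_yz, zpow_one, zpow_neg_one]
  rfl

theorem embed_singletonSeries (t : ℕ) :
    embed (singletonSeries t) = weylSeries Y Z q (Y ^ (t + 1)) / ((Y - Y⁻¹) * (Z - Z⁻¹)) := by
  have hA : Y ^ ((t : ℤ) + 1) = Y ^ (t + 1) := by exact_mod_cast zpow_natCast Y (t + 1)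
  have h := congrArg embed (C_mul_singletonSeries t)
  simp only [map_mul, map_sub, map_add, embed_mk_pow, embed_C_yz, zpow_one, zpow_neg, hA] at h
  rw [eq_div_iff (mul_ne_zero Y_sub_inv_ne_zero Z_sub_inv_ne_zero), weylSeries]
  linear_combination h

end CharField

open CharField

theorem flato_fronsdal_same_chirality_general (s : ℕ) :
    P4inv * PowerSeries.mk (fun a => chiY (2 * s + a) * chiZv a) ^ 2 =
    PowerSeries.C (∑ σ ∈ Finset.range (2 * s + 1), chiY (2 * σ)) +
      PowerSeries.mk (fun m =>
        (if 1 ≤ m then chiY (4 * s + m) * chiZv m else 0) -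
          (if 2 ≤ m then chiY (4 * s + m - 2) * chiZv (m - 2) else 0)) := by
  rw [show 4 * s = 2 * (2 * s) by ring, massless_tower_eq]
  apply embed_injective
  change embed (P4inv * singletonSeries (2 * s) ^ 2) = _
  simp only [map_mul, map_pow, map_add, map_sub, map_one, map_sum, embed_X, embed_P4inv,
    embed_singletonSeries, embed_C_chiY, sum_weylChar_two_mul Y_ne_zero Y_sub_inv_ne_zero]
  exact flato_fronsdal_weylSeries q (2 * s) Y_ne_zero Z_ne_zero Y_sub_inv_ne_zero Z_sub_inv_ne_zero
    (by simpa using one_sub_mul_q_ne_zero 1 1) (by simpa using one_sub_mul_q_ne_zero 1 (-1))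
    (by simpa using one_sub_mul_q_ne_zero (-1) 1) (by simpa using one_sub_mul_q_ne_zero (-1) (-1))

/-- Flato–Frønsdal theorem for two so(2,4) spin-s singletons of the same chirality, in
character form:
`P₄⁻¹ · (∑_{a≥0} q^a χ_{2s+a}(y)χ_a(z))²
  = ∑_{σ=0}^{2s} χ_{2σ}(y) + ∑_{b≥1} q^b (χ_{4s+b}(y)χ_b(z) - q χ_{4s+b-1}(y)χ_{b-1}(z))`.
The second series on the right has coefficient of `q^m` equal to
`χ_{4s+m}(y)χ_m(z)` for `m = 1`, and `χ_{4s+m}(y)χ_m(z) - χ_{4s+m-2}(y)χ_{m-2}(z)` for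
`m ≥ 2` (and `0` for `m = 0`). -/
theorem flato_fronsdal_same_chirality (s : ℕ) (hs : 1 ≤ s) :
    P4inv * PowerSeries.mk (fun a => chiY (2 * s + a) * chiZv a) ^ 2 =
    PowerSeries.C (∑ σ ∈ Finset.range (2 * s + 1), chiY (2 * σ)) +
      PowerSeries.mk (fun m =>
        (if 1 ≤ m then chiY (4 * s + m) * chiZv m else 0) -
          (if 2 ≤ m then chiY (4 * s + m - 2) * chiZv (m - 2) else 0)) :=
  flato_fronsdal_same_chirality_general s
end
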